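/- Let u : ℝ → ℝ be of class C⁴, fix x ∈ ℝ and κ ∈ ℝ, and let D : ℝ × ℝ → ℝ be Lipschitz continuous. Then the difference of the upwind dissipation terms over the right and left faces satisfies D(uL(u,h), uR(u,h))·(uR(u,h) − uL(u,h)) − D(uL⁻(u,h), uR⁻(u,h))·(uR⁻(u,h) − uL⁻(u,h)) = O(h⁴) as h → 0⁺; hence the dissipation term contributes only an O(h³) truncation error after division by h. -/

import Mathlib

open Asymptotics Filter Set MeasureTheory

noncomputable def uL (κ x : ℝ) (v : ℝ → ℝ) (h : ℝ) : ℝ :=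
  (v x + v (x + h)) / 2 - ((1 - κ) / 4) * (v (x + h) - 2 * v x + v (x - h))

noncomputable def uR (κ x : ℝ) (v : ℝ → ℝ) (h : ℝ) : ℝ :=
  (v (x + h) + v x) / 2 - ((1 - κ) / 4) * (v (x + 2 * h) - 2 * v (x + h) + v x)

/-- Left-face interpolated value from the left: same formula with `x` replaced by `x - h`. -/
noncomputable def uLm (κ x : ℝ) (v : ℝ → ℝ) (h : ℝ) : ℝ := uL κ (x - h) v h

/-- Left-face interpolated value from the right: same formula with `x` replaced by `x - h`. -/
noncomputable def uRm (κ x : ℝ) (v : ℝ → ℝ) (h : ℝ) : ℝ := uR κ (x - h) v h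

/-!
Each face jump `uR - uL` is `-(1 - κ)/4` times a third difference of `u`, so the jump `Q` at the
left face is `O(h³)` and its difference with the jump `P` at the right face, a fourth difference,
is `O(h⁴)`. With `a`, `b` the face states, the dissipation difference is
`D(a)·(P - Q) + (D(a) - D(b))·Q`: the first term is `O(1)·O(h⁴)`, the second `O(h)·O(h³)` since
`a - b = O(h)` and `D` is Lipschitz. The orders of the finite differences come from Taylor's
theorem: a stencil whose moments `∑ cᵢ aᵢᵏ` vanish for `k < n` kills every Taylor term below `hⁿ`.
-/

open scoped Topology Nat

section Stencil

variable {E : Type*} [NormedAddCommGroup E] [NormedSpace ℝ E]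

theorem isBigO_stencil_of_moment_eq_zero {ι : Type*} (s : Finset ι) (c a : ι → ℝ) {n : ℕ}
    {u : ℝ → E} (hu : ContDiff ℝ n u) (x : ℝ) (hmoment : ∀ k < n, ∑ i ∈ s, c i * a i ^ k = 0) :
    (fun h => ∑ i ∈ s, c i • u (x + a i * h)) =O[𝓝 0] fun h => h ^ n := by
  set T := taylorWithinEval u n univ x
  have hremainder : ∀ i ∈ s,
      (fun h => c i • (u (x + a i * h) - T (x + a i * h))) =O[𝓝 0] fun h => h ^ n := by
    intro i _
    have hlim : Tendsto (fun h : ℝ => x + a i * h) (𝓝 0) (𝓝 x) :=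
      (by fun_prop : Continuous fun h : ℝ => x + a i * h).tendsto' 0 x (by simp)
    refine (((taylor_isLittleO_univ hu).comp_tendsto hlim).isBigO.trans ?_).const_smul_left _
    simpa only [Function.comp_def, add_sub_cancel_left, mul_pow] using
      (isBigO_refl _ _).const_mul_left _
  set v := ((n ! : ℝ)⁻¹ * ∑ i ∈ s, c i * a i ^ n) • iteratedDerivWithin n u univ x
  have hpolynomial : ∀ h, ∑ i ∈ s, c i • T (x + a i * h) = h ^ n • v := by
    intro h
    simp only [T, taylor_within_apply, add_sub_cancel_left, Finset.smul_sum, smul_smul]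
    rw [Finset.sum_comm, Finset.sum_range_succ, Finset.sum_eq_zero, zero_add]
    · rw [smul_smul, Finset.mul_sum, Finset.mul_sum, Finset.sum_smul]
      exact Finset.sum_congr rfl fun i _ => by ring_nf
    · intro k hk
      rw [← Finset.sum_smul]
      convert zero_smul ℝ (iteratedDerivWithin k u univ x)
      calc _ = h ^ k * (k ! : ℝ)⁻¹ * ∑ i ∈ s, c i * a i ^ k := by
            rw [Finset.mul_sum]; exact Finset.sum_congr rfl fun i _ => by ring
        _ = 0 := by rw [hmoment k (Finset.mem_range.mp hk), mul_zero]
  have hsplit : (fun h => ∑ i ∈ s, c i • u (x + a i * h))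
      = fun h => ∑ i ∈ s, c i • (u (x + a i * h) - T (x + a i * h)) + h ^ n • v := by
    ext h
    rw [← hpolynomial, ← Finset.sum_add_distrib]
    simp only [smul_sub, sub_add_cancel]
  rw [hsplit]
  exact (IsBigO.fun_sum hremainder).add <| isBigO_of_le' _ fun h => by rw [norm_smul, mul_comm]

end Stencil

theorem LipschitzWith.isBigO_comp_sub_comp {α E F : Type*} [SeminormedAddCommGroup E]
    [SeminormedAddCommGroup F] {K : NNReal} {D : E → F} (hD : LipschitzWith K D)
    (l : Filter α) (f g : α → E) :
    (fun t => D (f t) - D (g t)) =O[l] fun t => f t - g t :=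
  isBigO_of_le' l fun _ => hD.norm_sub_le _ _

theorem Asymptotics.IsBigO.one_div_mul_of_pow_succ {𝕜 : Type*} [NormedField 𝕜] {l : Filter 𝕜}
    {f : 𝕜 → 𝕜} {n : ℕ} (hf : f =O[l] fun h => h ^ (n + 1)) :
    (fun h => 1 / h * f h) =O[l] fun h => h ^ n := by
  refine ((isBigO_refl (fun h : 𝕜 => 1 / h) l).mul hf).trans
    (isBigO_of_le' (c := 1) l fun h => ?_)
  rcases eq_or_ne h 0 with rfl | hh
  · simp
  · rw [pow_succ', one_mul, one_div, inv_mul_cancel_left₀ hh]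

/-- `faceJump κ (x - h) v h` unfolds to `uRm κ x v h - uLm κ x v h`, the jump at the left face. -/
noncomputable def faceJump (κ x : ℝ) (v : ℝ → ℝ) (h : ℝ) : ℝ := uR κ x v h - uL κ x v h

theorem isBigO_faceJump_sub_faceJump_left (κ x : ℝ) {u : ℝ → ℝ} (hu : ContDiff ℝ 4 u) :
    (fun h => faceJump κ x u h - faceJump κ (x - h) u h) =O[𝓝 0] fun h => h ^ 4 := by
  have hfourth := isBigO_stencil_of_moment_eq_zero Finset.univ ![1, -4, 6, -4, 1]
    ![2, 1, 0, -1, -2] hu x (by intro k hk; interval_cases k <;> norm_num [Fin.sum_univ_succ])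
  refine (hfourth.const_mul_left (-(1 - κ) / 4)).congr_left fun h => ?_
  simp only [faceJump, uL, uR, Fin.sum_univ_five, smul_eq_mul, Matrix.cons_val]
  ring_nf

theorem isBigO_faceJump_left (κ x : ℝ) {u : ℝ → ℝ} (hu : ContDiff ℝ 3 u) :
    (fun h => faceJump κ (x - h) u h) =O[𝓝 0] fun h => h ^ 3 := by
  have hthird := isBigO_stencil_of_moment_eq_zero Finset.univ ![1, -3, 3, -1]
    ![1, 0, -1, -2] hu x (by intro k hk; interval_cases k <;> norm_num [Fin.sum_univ_succ])
  refine (hthird.const_mul_left (-(1 - κ) / 4)).congr_left fun h => ?_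
  simp only [faceJump, uL, uR, Fin.sum_univ_four, smul_eq_mul, Matrix.cons_val]
  ring_nf

theorem isBigO_faceStates_sub_left (κ x : ℝ) {u : ℝ → ℝ} (hu : Differentiable ℝ u) :
    (fun h => (uL κ x u h, uR κ x u h) - (uLm κ x u h, uRm κ x u h)) =O[𝓝 0] fun h => h := by
  have hdiff : DifferentiableAt ℝ
      (fun h => (uL κ x u h, uR κ x u h) - (uLm κ x u h, uRm κ x u h)) 0 := by
    simp only [uLm, uRm, uL, uR]
    fun_prop
  simpa [uLm, uRm, uL, uR] using hdiff.isBigO_sub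

theorem quick_dissipation_difference (u : ℝ → ℝ) (hu : ContDiff ℝ 4 u) (x κ : ℝ)
    (D : ℝ × ℝ → ℝ) (K : NNReal) (hD : LipschitzWith K D) :
    ((fun h : ℝ => D (uL κ x u h, uR κ x u h) * (uR κ x u h - uL κ x u h)
        - D (uLm κ x u h, uRm κ x u h) * (uRm κ x u h - uLm κ x u h))
      =O[nhdsWithin 0 (Set.Ioi 0)] fun h : ℝ => h ^ 4) ∧
    ((fun h : ℝ => (1 / h) * (D (uL κ x u h, uR κ x u h) * (uR κ x u h - uL κ x u h)
        - D (uLm κ x u h, uRm κ x u h) * (uRm κ x u h - uLm κ x u h)))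
      =O[nhdsWithin 0 (Set.Ioi 0)] fun h : ℝ => h ^ 3) := by
  have hbounded : (fun h => D (uL κ x u h, uR κ x u h)) =O[𝓝 0] fun _ => (1 : ℝ) := by
    refine (hD.continuous.comp ?_).continuousAt.isBigO
    simp only [uL, uR]
    fun_prop
  have hstates := (hD.isBigO_comp_sub_comp _ _ _).trans
    (isBigO_faceStates_sub_left κ x (hu.differentiable (by norm_num)))
  have hfourth := isBigO_faceJump_sub_faceJump_left κ x hu
  have hthird := isBigO_faceJump_left κ x (hu.of_le (by norm_num))
  have hdiss : (fun h => D (uL κ x u h, uR κ x u h) * faceJump κ x u h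
      - D (uLm κ x u h, uRm κ x u h) * faceJump κ (x - h) u h) =O[𝓝 0] fun h => h ^ 4 := by
    refine (((hbounded.mul hfourth).congr_right fun h => one_mul _).add
      ((hstates.mul hthird).congr_right fun h => (pow_succ' h 3).symm)).congr_left fun h => ?_
    ring
  have hdiss' := hdiss.mono (nhdsWithin_le_nhds (s := Ioi 0))
  exact ⟨hdiss', hdiss'.one_div_mul_of_pow_succ⟩
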